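/- Let a ∈ [0,1] and ℓ ∈ L_a. Then for all t ∈ [0,1], ∫₀ᵗ ℓ_a⁺(x) dx ≥ ∫₀ᵗ ℓ(x) dx ≥ ∫₀ᵗ ℓ_a⁻(x) dx. -/

import Mathlib

open Set

/-- Membership in `L`: convex continuous `ℓ : [0,1] → [0,1]` with `ℓ 0 = 0`,
`ℓ 1 = 1`. -/
def MemLorenz (ℓ : ℝ → ℝ) : Prop :=
  ConvexOn ℝ (Icc (0:ℝ) 1) ℓ ∧ ContinuousOn ℓ (Icc (0:ℝ) 1) ∧
    (∀ t ∈ Icc (0:ℝ) 1, ℓ t ∈ Icc (0:ℝ) 1) ∧ ℓ 0 = 0 ∧ ℓ 1 = 1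

/-- The Gini index `G(ℓ) = 1 - 2∫₀¹ ℓ`. -/
noncomputable def Gini (ℓ : ℝ → ℝ) : ℝ := 1 - 2 * ∫ t in (0:ℝ)..1, ℓ t

/-- `ℓ_a⁻(t) = max {0, (t-a)/(1-a)}`. -/
noncomputable def laMinus (a : ℝ) : ℝ → ℝ := fun t => max 0 ((t - a) / (1 - a))

/-- `ℓ_a⁺(t) = (1-a)t` on `[0,1)`, `ℓ_a⁺(1) = 1`. -/
noncomputable def laPlus (a : ℝ) : ℝ → ℝ := fun t => if t = 1 then 1 else (1 - a) * t

/-!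
Over `[0,1]` the three curves `ℓ_a⁺`, `ℓ`, `ℓ_a⁻` all have integral `(1 - a)/2`: `ℓ_a^±` by
direct computation and `ℓ` because `G(ℓ) = a`. Convexity makes each difference single-crossing:
since `ℓ 0 = 0`, once `ℓ` lies below the chord `(1 - a) t` it lies below it on all of `[0, t]`,
and since `ℓ 1 = 1`, once `ℓ` lies above the line `(t - a)/(1 - a)` it does so on `[0, t]`.
When `f - g` changes sign at most once, from `≤ 0` to `> 0`, and `∫₀¹ f ≤ ∫₀¹ g`,
every partial integral satisfies `∫₀ᵗ f ≤ ∫₀ᵗ g`.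
-/

open MeasureTheory

theorem intervalIntegral_le_of_single_crossing {f g : ℝ → ℝ} {p q t : ℝ}
    (hf : IntervalIntegrable f volume p q) (hg : IntervalIntegrable g volume p q)
    (hpq : ∫ x in p..q, f x ≤ ∫ x in p..q, g x)
    (hcross : ∀ x y, p ≤ x → x ≤ y → y < q → f y ≤ g y → f x ≤ g x) (ht : t ∈ Icc p q) :
    ∫ x in p..t, f x ≤ ∫ x in p..t, g x := by
  have ht' : t ∈ uIcc p q := by rwa [uIcc_of_le (ht.1.trans ht.2)]
  have hsub_left : uIcc p t ⊆ uIcc p q := uIcc_subset_uIcc_left ht'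
  have hsub_right : uIcc t q ⊆ uIcc p q := uIcc_subset_uIcc_right ht'
  by_cases hcrossed : ∃ y ∈ Ico t q, f y ≤ g y
  · obtain ⟨y, hy, hfgy⟩ := hcrossed
    exact intervalIntegral.integral_mono_on ht.1 (hf.mono_set hsub_left) (hg.mono_set hsub_left)
      fun x hx => hcross x y hx.1 (hx.2.trans hy.1) hy.2 hfgy
  · push Not at hcrossed
    have htail : ∫ x in t..q, g x ≤ ∫ x in t..q, f x :=
      intervalIntegral.integral_mono_on_of_le_Ioo ht.2 (hg.mono_set hsub_right)
        (hf.mono_set hsub_right) fun x hx => (hcrossed x ⟨hx.1.le, hx.2⟩).le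
    have hf_split := intervalIntegral.integral_add_adjacent_intervals
      (hf.mono_set hsub_left) (hf.mono_set hsub_right)
    have hg_split := intervalIntegral.integral_add_adjacent_intervals
      (hg.mono_set hsub_left) (hg.mono_set hsub_right)
    linarith

theorem ConvexOn.sub_mul_add {s : Set ℝ} {f : ℝ → ℝ} (hf : ConvexOn ℝ s f) (c d : ℝ) :
    ConvexOn ℝ s fun x => f x - (c * x + d) :=
  hf.sub ⟨hf.1, fun x _ y _ u v _ _ huv =>
    le_of_eq (by simp only [smul_eq_mul]; linear_combination d * huv)⟩

theorem le_laPlus_of_le_laPlus {ℓ : ℝ → ℝ} (hconv : ConvexOn ℝ (Icc 0 1) ℓ) (h0 : ℓ 0 = 0)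
    (a : ℝ) {x y : ℝ} (hx : 0 ≤ x) (hxy : x ≤ y) (hy : y < 1) (hℓy : ℓ y ≤ laPlus a y) :
    ℓ x ≤ laPlus a x := by
  simp only [laPlus, if_neg hy.ne, if_neg (hxy.trans_lt hy).ne] at hℓy ⊢
  have hk : ConvexOn ℝ (Icc 0 1) fun z => ℓ z - (1 - a) * z := by
    simpa only [add_zero] using hconv.sub_mul_add (1 - a) 0
  have hseg : x ∈ segment ℝ 0 y := by rw [segment_eq_Icc (hx.trans hxy)]; exact ⟨hx, hxy⟩
  have := hk.le_on_segment ⟨le_rfl, zero_le_one⟩ ⟨hx.trans hxy, hy.le⟩ hseg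
  simp only [h0, mul_zero, sub_zero] at this
  linarith [this.trans (max_le le_rfl (by linarith))]

theorem laMinus_le_of_laMinus_le {ℓ : ℝ → ℝ} (hconv : ConvexOn ℝ (Icc 0 1) ℓ) (h1 : ℓ 1 = 1)
    (hnonneg : ∀ x ∈ Icc (0 : ℝ) 1, 0 ≤ ℓ x) (a : ℝ) {x y : ℝ} (hx : 0 ≤ x) (hxy : x ≤ y)
    (hy : y < 1) (hℓy : laMinus a y ≤ ℓ y) : laMinus a x ≤ ℓ x := by
  have hxI : x ∈ Icc (0 : ℝ) 1 := ⟨hx, by linarith⟩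
  refine max_le (hnonneg x hxI) ?_
  rcases eq_or_ne a 1 with rfl | ha
  · simpa using hnonneg x hxI
  have h1a : 1 - a ≠ 0 := sub_ne_zero.mpr (Ne.symm ha)
  have hk : ConvexOn ℝ (Icc 0 1) fun z => ℓ z - (z - a) / (1 - a) := by
    convert hconv.sub_mul_add (1 - a)⁻¹ (-a * (1 - a)⁻¹) using 3
    ring
  have hℓy' : (y - a) / (1 - a) ≤ ℓ y := (le_max_right (0 : ℝ) ((y - a) / (1 - a))).trans hℓy
  have := hk.le_left_of_right_le'' hxI ⟨zero_le_one, le_rfl⟩ hxy hy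
    (by simp only [h1, div_self h1a, sub_self]; linarith)
  linarith

theorem intervalIntegrable_laPlus (a : ℝ) : IntervalIntegrable (laPlus a) volume 0 1 :=
  ((continuous_const.mul continuous_id : Continuous fun x : ℝ => (1 - a) * x).intervalIntegrable
    0 1).congr_uIoo fun x hx => by
    rw [uIoo_of_le zero_le_one] at hx
    simp [laPlus, hx.2.ne]

theorem integral_laPlus (a : ℝ) : ∫ x in (0 : ℝ)..1, laPlus a x = (1 - a) / 2 := by
  rw [intervalIntegral.integral_congr_Ioo_of_le zero_le_one (g := fun x => (1 - a) * x)
    fun x hx => by simp [laPlus, hx.2.ne]]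
  rw [intervalIntegral.integral_const_mul, integral_id]
  ring

theorem continuous_laMinus (a : ℝ) : Continuous (laMinus a) :=
  continuous_const.max ((continuous_id.sub continuous_const).div_const _)

theorem integral_laMinus {a : ℝ} (ha : a ∈ Icc (0 : ℝ) 1) :
    ∫ x in (0 : ℝ)..1, laMinus a x = (1 - a) / 2 := by
  rcases ha.2.eq_or_lt with rfl | ha1
  · simp [laMinus]
  have h1a : 0 < 1 - a := by linarith
  have hzero : ∫ x in (0 : ℝ)..a, laMinus a x = 0 := by
    rw [intervalIntegral.integral_congr (g := fun _ => (0 : ℝ)) fun x hx => ?_]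
    · simp
    rw [uIcc_of_le ha.1] at hx
    exact max_eq_left (div_nonpos_of_nonpos_of_nonneg (by linarith [hx.2]) h1a.le)
  have hramp : ∫ x in a..1, laMinus a x = (1 - a) / 2 := by
    rw [intervalIntegral.integral_congr (g := fun x => (x - a) / (1 - a)) fun x hx => ?_]
    · simp only [intervalIntegral.integral_div, intervalIntegral.integral_comp_sub_right fun x => x,
        sub_self, integral_id]
      field_simp
      ring
    rw [uIcc_of_le ha.2] at hx
    exact max_eq_right (div_nonneg (by linarith [hx.1]) h1a.le)
  rw [← intervalIntegral.integral_add_adjacent_intervals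
    ((continuous_laMinus a).intervalIntegrable 0 a) ((continuous_laMinus a).intervalIntegrable a 1),
    hzero, hramp, zero_add]

/-- For `a ∈ [0,1]`, `ℓ ∈ L_a` and `t ∈ [0,1]`:
`∫₀ᵗ ℓ_a⁺ ≥ ∫₀ᵗ ℓ ≥ ∫₀ᵗ ℓ_a⁻`. -/
theorem extremal_third_order (a : ℝ) (ha : a ∈ Icc (0:ℝ) 1) (ℓ : ℝ → ℝ)
    (hℓ : MemLorenz ℓ) (hG : Gini ℓ = a) (t : ℝ) (ht : t ∈ Icc (0:ℝ) 1) :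
    (∫ x in (0:ℝ)..t, ℓ x) ≤ (∫ x in (0:ℝ)..t, laPlus a x) ∧
    (∫ x in (0:ℝ)..t, laMinus a x) ≤ (∫ x in (0:ℝ)..t, ℓ x) := by
  obtain ⟨hconv, hcont, hrange, h0, h1⟩ := hℓ
  have hℓint : IntervalIntegrable ℓ volume 0 1 := hcont.intervalIntegrable_of_Icc zero_le_one
  have hmass : ∫ x in (0 : ℝ)..1, ℓ x = (1 - a) / 2 := by unfold Gini at hG; linarith
  constructor
  · exact intervalIntegral_le_of_single_crossing hℓint (intervalIntegrable_laPlus a)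
      (by rw [hmass, integral_laPlus])
      (fun _ _ => le_laPlus_of_le_laPlus hconv h0 a) ht
  · exact intervalIntegral_le_of_single_crossing ((continuous_laMinus a).intervalIntegrable 0 1)
      hℓint (by rw [hmass, integral_laMinus ha])
      (fun _ _ => laMinus_le_of_laMinus_le hconv h1 (fun x hx => (hrange x hx).1) a) ht
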